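/- arXiv:1709.00582 — 2 statements merged into one kernel-verified Lean document; each statement's English description precedes it below -/
import Mathlib

section
/- Truncated two-point function identity (finite-graph version of Lemma 2.1): for all x, y ∈ V, ⟨σ_x σ_y⟩_{J,H} − ⟨σ_x⟩_{J,H} ⟨σ_y⟩_{J,H} = P̂_{J,H}( x ↔ y ) − P̂_{J,H}( x ↔ g ) · P̂_{J,H}( y ↔ g ). -/
open scoped Classical

namespace FK

variable {V : Type*} [Fintype V] [DecidableEq V]

/-- Internal bond configurations on the edge set `E`. -/
abbrev Config (E : Finset (Sym2 V)) : Type _ := {e : Sym2 V // e ∈ E} → Bool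

/-- Full bond configurations: internal edges together with the ghost edges
(one for each vertex). -/
abbrev GConfig (E : Finset (Sym2 V)) : Type _ := Config E × (V → Bool)

/-- Two vertices are adjacent if they are distinct and joined by an open internal edge. -/
def adj (E : Finset (Sym2 V)) (ω : Config E) (u v : V) : Prop :=
  u ≠ v ∧ ∃ h : s(u, v) ∈ E, ω ⟨s(u, v), h⟩ = true

/-- The same-cluster relation of an internal configuration. -/
def conn (E : Finset (Sym2 V)) (ω : Config E) (u v : V) : Prop :=
  Relation.ReflTransGen (adj E ω) u v

/-- The cluster of a vertex. -/
noncomputable def cluster (E : Finset (Sym2 V)) (ω : Config E) (v : V) : Finset V :=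
  Finset.univ.filter (fun u => conn E ω v u)

/-- The set of clusters (connected components) of an internal configuration. -/
noncomputable def clusters (E : Finset (Sym2 V)) (ω : Config E) : Finset (Finset V) :=
  Finset.univ.image (cluster E ω)

/-- Adjacency in the extended graph, where `none` is the ghost vertex `g`. -/
def adjG (E : Finset (Sym2 V)) (ω : GConfig E) : Option V → Option V → Prop
  | some u, some v => adj E ω.1 u v
  | some u, none => ω.2 u = true
  | none, some v => ω.2 v = true
  | none, none => False

/-- Connectivity in the extended graph (with the ghost vertex `none`). -/
def connG (E : Finset (Sym2 V)) (ω : GConfig E) (x y : Option V) : Prop :=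
  Relation.ReflTransGen (adjG E ω) x y

/-- Number of connected components of the extended graph not containing the ghost. -/
noncomputable def kGhost (E : Finset (Sym2 V)) (ω : GConfig E) : ℕ :=
  (((Finset.univ : Finset V).filter (fun v => ¬ connG E ω (some v) none)).image
    (fun v => Finset.univ.filter (fun u : V => connG E ω (some v) (some u)))).card

/-- The product over internal edges of the usual FK edge weights. -/
noncomputable def edgeWeight (J : Sym2 V → ℝ) (E : Finset (Sym2 V)) (ω : Config E) : ℝ :=
  ∏ e : {e : Sym2 V // e ∈ E},
    if ω e then 1 - Real.exp (-2 * J e.1) else Real.exp (-2 * J e.1)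

/-- Unnormalized FK (q = 2) weight with ghost. -/
noncomputable def fkWeight (J : Sym2 V → ℝ) (H : V → ℝ) (E : Finset (Sym2 V))
    (ω : GConfig E) : ℝ :=
  2 ^ kGhost E ω * edgeWeight J E ω.1 *
    ∏ v, if ω.2 v then 1 - Real.exp (-2 * H v) else Real.exp (-2 * H v)

/-- The FK (q = 2) random-cluster measure with ghost. -/
noncomputable def fkProb (J : Sym2 V → ℝ) (H : V → ℝ) (E : Finset (Sym2 V))
    (ω : GConfig E) : ℝ :=
  fkWeight J H E ω / ∑ ω' : GConfig E, fkWeight J H E ω'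

/-- The marginal of the FK measure with ghost on the internal edges. -/
noncomputable def fkMarginal (J : Sym2 V → ℝ) (H : V → ℝ) (E : Finset (Sym2 V))
    (ωi : Config E) : ℝ :=
  ∑ ωg : V → Bool, fkProb J H E (ωi, ωg)

/-- Unnormalized zero-field random-cluster (q = 2) weight. -/
noncomputable def rcWeight (J : Sym2 V → ℝ) (E : Finset (Sym2 V)) (ω : Config E) : ℝ :=
  2 ^ (clusters E ω).card * edgeWeight J E ω

/-- The zero-field random-cluster (q = 2) measure. -/
noncomputable def rcProb (J : Sym2 V → ℝ) (E : Finset (Sym2 V)) (ω : Config E) : ℝ :=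
  rcWeight J E ω / ∑ ω' : Config E, rcWeight J E ω'

/-- The spin value (±1) of a Boolean. -/
def spin (b : Bool) : ℝ := if b then 1 else -1

/-- The product of the two spins at the endpoints of an (unordered) edge. -/
def pairSpin (σ : V → Bool) : Sym2 V → ℝ :=
  Sym2.lift ⟨fun u v => spin (σ u) * spin (σ v), fun u v => mul_comm _ _⟩

/-- Unnormalized Ising weight. -/
noncomputable def isingWeight (J : Sym2 V → ℝ) (H : V → ℝ) (E : Finset (Sym2 V))
    (σ : V → Bool) : ℝ :=
  Real.exp ((∑ e ∈ E, J e * pairSpin σ e) + ∑ v, H v * spin (σ v))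

/-- The Ising Gibbs measure. -/
noncomputable def isingProb (J : Sym2 V → ℝ) (H : V → ℝ) (E : Finset (Sym2 V))
    (σ : V → Bool) : ℝ :=
  isingWeight J H E σ / ∑ σ' : V → Bool, isingWeight J H E σ'

/-- Unnormalized Edwards–Sokal weight on pairs (spin configuration, bond configuration
with ghost); the ghost spin is `+1` (i.e. `true`). -/
noncomputable def esWeight (J : Sym2 V → ℝ) (H : V → ℝ) (E : Finset (Sym2 V))
    (p : (V → Bool) × GConfig E) : ℝ :=
  (∏ e : {e : Sym2 V // e ∈ E},
      if p.2.1 e then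
        (if ∀ u ∈ e.1, ∀ v ∈ e.1, p.1 u = p.1 v then 1 - Real.exp (-2 * J e.1) else 0)
      else Real.exp (-2 * J e.1))
  * ∏ v, if p.2.2 v then (if p.1 v = true then 1 - Real.exp (-2 * H v) else 0)
         else Real.exp (-2 * H v)

/-- The Edwards–Sokal coupling measure. -/
noncomputable def esProb (J : Sym2 V → ℝ) (H : V → ℝ) (E : Finset (Sym2 V))
    (p : (V → Bool) × GConfig E) : ℝ :=
  esWeight J H E p / ∑ p' : (V → Bool) × GConfig E, esWeight J H E p'

end FK

/-!
Edwards–Sokal coupling with a ghost. On pairs (σ, ω) put the weight in which an open bond forces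
equal spins at its ends and an open ghost bond forces spin `+1`. For fixed σ the sum over ω
factorises over bonds and gives the Ising weight up to a constant. For fixed ω the admissible σ
are the ±1 colorings of the clusters not joined to the ghost, so summing over them gives the FK
weight `2 ^ kGhost · (bond weights)`. Flipping the spins of such a cluster preserves admissibility,
hence, given ω, the average of `σ x` is `1[x ↔ g]` and that of `σ x σ y` is `1[x ↔ y]`. Therefore
`⟨σ x⟩ = P̂(x ↔ g)` and `⟨σ x σ y⟩ = P̂(x ↔ y)`, and the identity follows by subtraction.
-/

namespace FK

open Finset

variable {V : Type*}

def withGhost (σ : V → Bool) : Option V → Bool := fun a => a.elim true σ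

@[simp] lemma withGhost_none (σ : V → Bool) : withGhost σ none = true := rfl

@[simp] lemma withGhost_some (σ : V → Bool) (v : V) : withGhost σ (some v) = σ v := rfl

section Flip

variable {r : Option V → Option V → Prop}

noncomputable def flipCluster (r : Option V → Option V → Prop) (z : V) (σ : V → Bool) :
    V → Bool :=
  fun v => if r (some z) (some v) then !σ v else σ v

lemma flipCluster_involutive (r : Option V → Option V → Prop) (z : V) :
    Function.Involutive (flipCluster r z) := by
  intro σ
  funext v
  by_cases h : r (some z) (some v) <;> simp [flipCluster, h]

lemma flipCluster_self (hr : Equivalence r) (z : V) (σ : V → Bool) :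
    flipCluster r z σ z = !σ z := by
  simp [flipCluster, hr.refl]

lemma flipCluster_of_not {z v : V} (h : ¬ r (some z) (some v)) (σ : V → Bool) :
    flipCluster r z σ v = σ v := by
  simp [flipCluster, h]

lemma withGhost_flipCluster {z : V} (hz : ¬ r (some z) none) (σ : V → Bool) (a : Option V) :
    withGhost (flipCluster r z σ) a = if r (some z) a then !withGhost σ a else withGhost σ a := by
  cases a <;> simp [flipCluster, hz]

end Flip

section GhostColorings

variable [Fintype V] {r : Option V → Option V → Prop}

noncomputable def ghostClass (r : Option V → Option V → Prop) (v : V) : Finset V :=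
  univ.filter fun u => r (some v) (some u)

lemma ghostClass_eq_iff (hr : Equivalence r) {u v : V} :
    ghostClass r u = ghostClass r v ↔ r (some u) (some v) := by
  refine ⟨fun h => ?_, fun h => ?_⟩
  · have hv : v ∈ ghostClass r v := mem_filter.mpr ⟨mem_univ v, hr.refl _⟩
    rw [← h] at hv
    exact (mem_filter.mp hv).2
  · ext w
    simp only [ghostClass, mem_filter, mem_univ, true_and]
    exact ⟨hr.trans (hr.symm h), hr.trans h⟩

variable [DecidableEq V]

noncomputable def ghostColorings (r : Option V → Option V → Prop) : Finset (V → Bool) :=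
  univ.filter fun σ => ∀ a b, r a b → withGhost σ a = withGhost σ b

lemma withGhost_eq_of_mem_ghostColorings {σ : V → Bool} (hσ : σ ∈ ghostColorings r)
    {a b : Option V} (hab : r a b) : withGhost σ a = withGhost σ b :=
  (mem_filter.mp hσ).2 a b hab

noncomputable def ghostClasses (r : Option V → Option V → Prop) : Finset (Finset V) :=
  (univ.filter fun v => ¬ r (some v) none).image (ghostClass r)

lemma ghostClass_mem_ghostClasses {v : V} (hv : ¬ r (some v) none) :
    ghostClass r v ∈ ghostClasses r :=
  mem_image_of_mem _ (mem_filter.mpr ⟨mem_univ v, hv⟩)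

noncomputable def ofClassColoring (r : Option V → Option V → Prop)
    (f : ghostClasses r → Bool) (v : V) : Bool :=
  if hv : r (some v) none then true else f ⟨ghostClass r v, ghostClass_mem_ghostClasses hv⟩

lemma ofClassColoring_mem_ghostColorings (hr : Equivalence r) (f : ghostClasses r → Bool) :
    ofClassColoring r f ∈ ghostColorings r := by
  refine mem_filter.mpr ⟨mem_univ _, ?_⟩
  rintro (_ | u) (_ | v) huv
  · rfl
  · simp [ofClassColoring, hr.symm huv]
  · simp [ofClassColoring, huv]
  · by_cases hu : r (some u) none
    · simp [ofClassColoring, hu, hr.trans (hr.symm huv) hu]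
    · have hv : ¬ r (some v) none := fun hv => hu (hr.trans huv hv)
      simp only [withGhost_some, ofClassColoring, dif_neg hu, dif_neg hv]
      congr 2
      exact (ghostClass_eq_iff hr).mpr huv

theorem card_ghostColorings (hr : Equivalence r) :
    #(ghostColorings r) = 2 ^ #(ghostClasses r) := by
  have hrep : ∀ c : ghostClasses r, ∃ v, ¬ r (some v) none ∧ ghostClass r v = c := fun c => by
    obtain ⟨v, hv, hc⟩ := mem_image.mp c.2
    exact ⟨v, (mem_filter.mp hv).2, hc⟩
  choose rep hrep_ghost hrep_class using hrep
  rw [← Fintype.card_coe (ghostClasses r), ← Fintype.card_bool, ← Fintype.card_fun,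
    ← card_univ]
  refine card_bij' (fun σ _ c => σ (rep c)) (fun f _ => ofClassColoring r f)
    (fun _ _ => mem_univ _) (fun f _ => ofClassColoring_mem_ghostColorings hr f) ?_ ?_
  · intro σ hσ
    funext v
    by_cases hv : r (some v) none
    · simpa [ofClassColoring, hv] using (withGhost_eq_of_mem_ghostColorings hσ hv).symm
    · simp only [ofClassColoring, dif_neg hv]
      have hcl := (ghostClass_eq_iff hr).mp (hrep_class ⟨_, ghostClass_mem_ghostClasses hv⟩)
      exact withGhost_eq_of_mem_ghostColorings hσ hcl
  · intro f _
    funext c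
    simp only [ofClassColoring, dif_neg (hrep_ghost c), hrep_class]

lemma flipCluster_mem_ghostColorings (hr : Equivalence r) {z : V} (hz : ¬ r (some z) none)
    {σ : V → Bool} (hσ : σ ∈ ghostColorings r) : flipCluster r z σ ∈ ghostColorings r := by
  refine mem_filter.mpr ⟨mem_univ _, fun a b hab => ?_⟩
  have hza : r (some z) a ↔ r (some z) b := ⟨fun h => hr.trans h hab, fun h => hr.trans h (hr.symm hab)⟩
  rw [withGhost_flipCluster hz, withGhost_flipCluster hz, hza,
    withGhost_eq_of_mem_ghostColorings hσ hab]

lemma sum_ghostColorings_eq_zero_of_flip (hr : Equivalence r) {z : V} (hz : ¬ r (some z) none)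
    (F : (V → Bool) → ℝ) (hF : ∀ σ, F (flipCluster r z σ) = -F σ) :
    ∑ σ ∈ ghostColorings r, F σ = 0 :=
  sum_involution (fun σ _ => flipCluster r z σ) (fun σ _ => by rw [hF, add_neg_cancel])
    (fun σ _ _ h => by simpa [flipCluster_self hr] using congrFun h z)
    (fun _ hσ => flipCluster_mem_ghostColorings hr hz hσ)
    (fun σ _ => flipCluster_involutive r z σ)

lemma spin_not (b : Bool) : spin (!b) = -spin b := by
  cases b <;> norm_num [spin]

lemma spin_mul_self (b : Bool) : spin b * spin b = 1 := by
  cases b <;> norm_num [spin]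

theorem sum_ghostColorings_spin (hr : Equivalence r) (x : V) :
    ∑ σ ∈ ghostColorings r, spin (σ x) =
      if r (some x) none then (#(ghostColorings r) : ℝ) else 0 := by
  split_ifs with hx
  · rw [cast_card]
    refine sum_congr rfl fun σ hσ => ?_
    have hσx : σ x = true := withGhost_eq_of_mem_ghostColorings hσ hx
    rw [hσx, spin, if_pos rfl]
  · exact sum_ghostColorings_eq_zero_of_flip hr hx _ fun σ => by
      rw [flipCluster_self hr, spin_not]

theorem sum_ghostColorings_spin_mul_spin (hr : Equivalence r) (x y : V) :
    ∑ σ ∈ ghostColorings r, spin (σ x) * spin (σ y) =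
      if r (some x) (some y) then (#(ghostColorings r) : ℝ) else 0 := by
  split_ifs with hxy
  · rw [cast_card]
    refine sum_congr rfl fun σ hσ => ?_
    have hσxy : σ x = σ y := withGhost_eq_of_mem_ghostColorings hσ hxy
    rw [hσxy, spin_mul_self]
  · by_cases hx : r (some x) none
    · have hy : ¬ r (some y) none := fun hy => hxy (hr.trans hx (hr.symm hy))
      exact sum_ghostColorings_eq_zero_of_flip hr hy _ fun σ => by
        rw [flipCluster_self hr, flipCluster_of_not (fun h => hxy (hr.symm h)), spin_not,
          mul_neg]
    · exact sum_ghostColorings_eq_zero_of_flip hr hx _ fun σ => by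
        rw [flipCluster_self hr, flipCluster_of_not hxy, spin_not, neg_mul]

end GhostColorings

section GhostGraph

variable {E : Finset (Sym2 V)}

lemma adj_symm {ω : Config E} {u v : V} (h : adj E ω u v) : adj E ω v u := by
  obtain ⟨hne, hmem, hopen⟩ := h
  refine ⟨hne.symm, ?_⟩
  rw [Sym2.eq_swap]
  exact ⟨hmem, hopen⟩

lemma adjG_symm {ω : GConfig E} {a b : Option V} (h : adjG E ω a b) : adjG E ω b a := by
  cases a <;> cases b <;> first | exact h | exact adj_symm h

lemma connG_equivalence (ω : GConfig E) : Equivalence (connG E ω) :=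
  haveI : Std.Symm (adjG E ω) := ⟨fun _ _ => adjG_symm⟩
  ⟨fun _ => .refl, fun h => Relation.ReflTransGen.stdSymm.symm _ _ h, .trans⟩

lemma connG_of_mem_of_open {ω : GConfig E} {e : E} (he : ω.1 e = true) {u v : V}
    (hu : u ∈ e.1) (hv : v ∈ e.1) : connG E ω (some u) (some v) := by
  by_cases huv : u = v
  · subst huv
    exact .refl
  · obtain ⟨e, hE⟩ := e
    obtain rfl : e = s(u, v) := (Sym2.mem_and_mem_iff huv).mp ⟨hu, hv⟩
    exact .single ⟨huv, hE, he⟩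

end GhostGraph

section EdwardsSokal

lemma ite_add_exp_eq (K : ℝ) (a b : Bool) :
    (if a = b then 1 - Real.exp (-2 * K) else 0) + Real.exp (-2 * K) =
      Real.exp (-K) * Real.exp (K * (spin a * spin b)) := by
  rw [← Real.exp_add]
  cases a <;> cases b <;> norm_num [spin] <;> ring_nf

noncomputable def esGhostFactor (H : V → ℝ) (σ : V → Bool) (v : V) (b : Bool) : ℝ :=
  if b then (if σ v = true then 1 - Real.exp (-2 * H v) else 0) else Real.exp (-2 * H v)

lemma esGhostFactor_eq (H : V → ℝ) (σ : V → Bool) (v : V) (b : Bool) :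
    esGhostFactor H σ v b =
      if (b = true → σ v = true) then
        (if b then 1 - Real.exp (-2 * H v) else Real.exp (-2 * H v)) else 0 := by
  cases b <;> simp [esGhostFactor]

lemma sum_esGhostFactor (H : V → ℝ) (σ : V → Bool) (v : V) :
    ∑ b, esGhostFactor H σ v b = Real.exp (-H v) * Real.exp (H v * spin (σ v)) := by
  simpa [Fintype.sum_bool, esGhostFactor, spin] using ite_add_exp_eq (H v) (σ v) true

variable [Fintype V] [DecidableEq V] {E : Finset (Sym2 V)}

noncomputable def esEdgeFactor (J : Sym2 V → ℝ) (σ : V → Bool) (e : Sym2 V) (b : Bool) : ℝ :=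
  if b then (if ∀ u ∈ e, ∀ v ∈ e, σ u = σ v then 1 - Real.exp (-2 * J e) else 0)
  else Real.exp (-2 * J e)

lemma esEdgeFactor_eq (J : Sym2 V → ℝ) (σ : V → Bool) (e : Sym2 V) (b : Bool) :
    esEdgeFactor J σ e b =
      if (b = true → ∀ u ∈ e, ∀ v ∈ e, σ u = σ v) then
        (if b then 1 - Real.exp (-2 * J e) else Real.exp (-2 * J e)) else 0 := by
  cases b <;> simp [esEdgeFactor]

lemma sum_esEdgeFactor (J : Sym2 V → ℝ) (σ : V → Bool) (e : Sym2 V) :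
    ∑ b, esEdgeFactor J σ e b = Real.exp (-J e) * Real.exp (J e * pairSpin σ e) := by
  induction e using Sym2.inductionOn with
  | hf a b =>
    have hagree : (∀ u ∈ s(a, b), ∀ v ∈ s(a, b), σ u = σ v) ↔ σ a = σ b := by
      simp only [Sym2.mem_iff, forall_eq_or_imp, forall_eq]
      grind
    simp only [Fintype.sum_bool, esEdgeFactor, if_true, hagree, Bool.false_eq_true, if_false]
    exact ite_add_exp_eq _ (σ a) (σ b)

lemma esWeight_eq_prod_mul_prod (J : Sym2 V → ℝ) (H : V → ℝ) (σ : V → Bool) (ω : GConfig E) :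
    esWeight J H E (σ, ω) =
      (∏ e : E, esEdgeFactor J σ e (ω.1 e)) * ∏ v, esGhostFactor H σ v (ω.2 v) :=
  rfl

theorem sum_esWeight_snd (J : Sym2 V → ℝ) (H : V → ℝ) (σ : V → Bool) :
    ∑ ω : GConfig E, esWeight J H E (σ, ω) =
      Real.exp (-(∑ e ∈ E, J e) - ∑ v, H v) * isingWeight J H E σ := by
  simp only [esWeight_eq_prod_mul_prod, Fintype.sum_prod_type, ← Fintype.sum_mul_sum,
    ← Fintype.prod_sum, sum_esEdgeFactor, sum_esGhostFactor]
  simp only [isingWeight, ← Real.exp_add, ← Real.exp_sum, sum_add_distrib, sum_neg_distrib,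
    sum_coe_sort E (fun e => J e * pairSpin σ e), sum_coe_sort E (fun e => -J e)]
  ring_nf

lemma kGhost_eq_card_ghostClasses (ω : GConfig E) :
    kGhost E ω = #(ghostClasses (connG E ω)) := rfl

noncomputable def bondWeight (J : Sym2 V → ℝ) (H : V → ℝ) (E : Finset (Sym2 V))
    (ω : GConfig E) : ℝ :=
  edgeWeight J E ω.1 * ∏ v, if ω.2 v then 1 - Real.exp (-2 * H v) else Real.exp (-2 * H v)

lemma fkWeight_eq_bondWeight_mul_card (J : Sym2 V → ℝ) (H : V → ℝ) (ω : GConfig E) :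
    fkWeight J H E ω = bondWeight J H E ω * #(ghostColorings (connG E ω)) := by
  rw [card_ghostColorings (connG_equivalence ω), ← kGhost_eq_card_ghostClasses, fkWeight,
    bondWeight]
  push_cast
  ring

lemma esCompatible_iff_mem_ghostColorings {ω : GConfig E} {σ : V → Bool} :
    ((∀ e : E, ω.1 e = true → ∀ u ∈ e.1, ∀ v ∈ e.1, σ u = σ v) ∧
      ∀ v, ω.2 v = true → σ v = true) ↔ σ ∈ ghostColorings (connG E ω) := by
  refine ⟨fun ⟨hbond, hghost⟩ => mem_filter.mpr ⟨mem_univ _, fun a b hab => ?_⟩,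
    fun hσ => ⟨fun e he u hu v hv => ?_, fun v hv => ?_⟩⟩
  · induction hab with
    | refl => rfl
    | @tail b c _ hbc ih =>
      refine ih.trans ?_
      rcases b with _ | u <;> rcases c with _ | v
      · rfl
      · exact (hghost v hbc).symm
      · exact hghost u hbc
      · exact hbond ⟨_, hbc.2.1⟩ hbc.2.2 u (Sym2.mem_mk_left u v) v (Sym2.mem_mk_right u v)
  · exact withGhost_eq_of_mem_ghostColorings hσ (connG_of_mem_of_open he hu hv)
  · exact withGhost_eq_of_mem_ghostColorings hσ (.single (show adjG E ω (some v) none from hv))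

theorem esWeight_eq (J : Sym2 V → ℝ) (H : V → ℝ) (σ : V → Bool) (ω : GConfig E) :
    esWeight J H E (σ, ω) =
      if σ ∈ ghostColorings (connG E ω) then bondWeight J H E ω else 0 := by
  simp only [esWeight_eq_prod_mul_prod, esEdgeFactor_eq, esGhostFactor_eq, prod_ite_zero,
    mem_univ, true_implies, ite_zero_mul_ite_zero]
  exact if_congr esCompatible_iff_mem_ghostColorings rfl rfl

lemma sum_esWeight_mul (J : Sym2 V → ℝ) (H : V → ℝ) (ω : GConfig E) (F : (V → Bool) → ℝ) :
    ∑ σ, esWeight J H E (σ, ω) * F σ =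
      bondWeight J H E ω * ∑ σ ∈ ghostColorings (connG E ω), F σ := by
  simp only [esWeight_eq, ite_mul, zero_mul, ← sum_filter, filter_mem_eq_inter, univ_inter,
    mul_sum]

theorem sum_esWeight_fst (J : Sym2 V → ℝ) (H : V → ℝ) (ω : GConfig E) :
    ∑ σ, esWeight J H E (σ, ω) = fkWeight J H E ω := by
  simpa [fkWeight_eq_bondWeight_mul_card] using sum_esWeight_mul J H ω 1

theorem sum_esWeight_mul_spin (J : Sym2 V → ℝ) (H : V → ℝ) (ω : GConfig E) (x : V) :
    ∑ σ, esWeight J H E (σ, ω) * spin (σ x) =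
      if connG E ω (some x) none then fkWeight J H E ω else 0 := by
  rw [sum_esWeight_mul, sum_ghostColorings_spin (connG_equivalence ω),
    fkWeight_eq_bondWeight_mul_card, mul_ite, mul_zero]

theorem sum_esWeight_mul_spin_mul_spin (J : Sym2 V → ℝ) (H : V → ℝ) (ω : GConfig E)
    (x y : V) :
    ∑ σ, esWeight J H E (σ, ω) * (spin (σ x) * spin (σ y)) =
      if connG E ω (some x) (some y) then fkWeight J H E ω else 0 := by
  rw [sum_esWeight_mul, sum_ghostColorings_spin_mul_spin (connG_equivalence ω),
    fkWeight_eq_bondWeight_mul_card, mul_ite, mul_zero]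

theorem sum_isingProb_mul_eq_sum_fkProb (J : Sym2 V → ℝ) (H : V → ℝ) (F : (V → Bool) → ℝ)
    (P : GConfig E → Prop)
    (hF : ∀ ω, ∑ σ, esWeight J H E (σ, ω) * F σ = if P ω then fkWeight J H E ω else 0) :
    ∑ σ, isingProb J H E σ * F σ = ∑ ω, if P ω then fkProb J H E ω else 0 := by
  set c := Real.exp (-(∑ e ∈ E, J e) - ∑ v, H v)
  have hsum : ∀ G : (V → Bool) → ℝ,
      ∑ ω, ∑ σ, esWeight J H E (σ, ω) * G σ = c * ∑ σ, isingWeight J H E σ * G σ := by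
    intro G
    rw [sum_comm]
    simp only [← sum_mul, sum_esWeight_snd, mul_assoc, ← mul_sum]
    rfl
  have hZ : ∑ ω, fkWeight J H E ω = c * ∑ σ, isingWeight J H E σ := by
    simpa [sum_esWeight_fst] using hsum 1
  calc ∑ σ, isingProb J H E σ * F σ
      = (c * ∑ σ, isingWeight J H E σ * F σ) / (c * ∑ σ, isingWeight J H E σ) := by
        rw [mul_div_mul_left _ _ (Real.exp_pos _).ne', sum_div]
        simp only [isingProb, div_mul_eq_mul_div]
    _ = (∑ ω, if P ω then fkWeight J H E ω else 0) / ∑ ω, fkWeight J H E ω := by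
        rw [← hsum, hZ]
        simp only [hF]
    _ = ∑ ω, if P ω then fkProb J H E ω else 0 := by
        rw [sum_div]
        simp only [fkProb, ite_div, zero_div]

end EdwardsSokal

end FK

theorem truncated_two_point_identity_general
    {V : Type*} [Fintype V] [DecidableEq V]
    (E : Finset (Sym2 V)) (J : Sym2 V → ℝ) (H : V → ℝ) (x y : V) :
    (∑ σ : V → Bool, FK.isingProb J H E σ * (FK.spin (σ x) * FK.spin (σ y)))
      - (∑ σ : V → Bool, FK.isingProb J H E σ * FK.spin (σ x))
        * (∑ σ : V → Bool, FK.isingProb J H E σ * FK.spin (σ y))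
    = (∑ ω : FK.GConfig E,
          if FK.connG E ω (some x) (some y) then FK.fkProb J H E ω else 0)
      - (∑ ω : FK.GConfig E,
          if FK.connG E ω (some x) none then FK.fkProb J H E ω else 0)
        * (∑ ω : FK.GConfig E,
          if FK.connG E ω (some y) none then FK.fkProb J H E ω else 0) := by
  rw [FK.sum_isingProb_mul_eq_sum_fkProb J H _ _ (FK.sum_esWeight_mul_spin_mul_spin J H · x y),
    FK.sum_isingProb_mul_eq_sum_fkProb J H _ _ (FK.sum_esWeight_mul_spin J H · x),
    FK.sum_isingProb_mul_eq_sum_fkProb J H _ _ (FK.sum_esWeight_mul_spin J H · y)]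

/-- truncated two-point function identity. -/
theorem truncated_two_point_identity
    {V : Type*} [Fintype V] [DecidableEq V]
    (E : Finset (Sym2 V)) (hE : ∀ e ∈ E, ¬ e.IsDiag)
    (J : Sym2 V → ℝ) (hJ : ∀ e ∈ E, 0 ≤ J e)
    (H : V → ℝ) (hH : ∀ v, 0 ≤ H v) (x y : V) :
    (∑ σ : V → Bool, FK.isingProb J H E σ * (FK.spin (σ x) * FK.spin (σ y)))
      - (∑ σ : V → Bool, FK.isingProb J H E σ * FK.spin (σ x))
        * (∑ σ : V → Bool, FK.isingProb J H E σ * FK.spin (σ y))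
    = (∑ ω : FK.GConfig E,
          if FK.connG E ω (some x) (some y) then FK.fkProb J H E ω else 0)
      - (∑ ω : FK.GConfig E,
          if FK.connG E ω (some x) none then FK.fkProb J H E ω else 0)
        * (∑ ω : FK.GConfig E,
          if FK.connG E ω (some y) none then FK.fkProb J H E ω else 0) :=
  truncated_two_point_identity_general E J H x y
end

section
/- Tilted moment generating function identity (discrete, finite-graph analogue of Theorem 1.2, equation (1.8)): for every external field H : V → [0,∞) and every function f : V → ℝ, E_{P_{J,H}}[ exp( ∑_{v∈V} f_v σ_v ) ] = E_{P̃_{J,0}}[ ∏_{C a cluster of ω̃} cosh( H(C) + f(C) ) ] / E_{P̃_{J,0}}[ ∏_{C a cluster of ω̃} cosh( H(C) ) ], where H(C) := ∑_{v∈C} H_v and f(C) := ∑_{v∈C} f_v. -/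
open scoped Classical

/-!
Edwards–Sokal expansion. Since `σ_u σ_v = ±1`, each edge factor splits as
`exp (J σ_u σ_v) = exp J * (exp (-2J) + (1 - exp (-2J)) * 1[σ_u = σ_v])`; expanding the product
over edges turns the Ising partition function with field `g` into a sum over bond configurations
`ω` of the FK edge weight of `ω` times the sum over spin configurations constant on the clusters
of `ω`. The latter factorizes over clusters, each contributing `2 cosh (g C)`, so
`∑_σ exp (−Hamiltonian with field g) = exp (∑ J) * ∑_ω rcWeight ω * ∏_C cosh (g C)`.
Tilting by `exp (∑ f σ)` replaces the field `H` by `H + f`, and the identity is the quotient of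
the expansions for `H + f` and `H`.
-/

namespace FK

open Finset Real

section Spin

variable {V : Type*} [Fintype V]

lemma sum_bool_exp_mul_spin (x : ℝ) : ∑ b : Bool, exp (x * spin b) = 2 * cosh x := by
  simp only [Fintype.sum_bool, spin, if_true, Bool.false_eq_true, if_false, mul_one, mul_neg,
    cosh_eq]
  ring

lemma sum_exp_spin_comp {Q : Type*} [Fintype Q] [DecidableEq Q] (p : V → Q) (g : V → ℝ) :
    ∑ τ : Q → Bool, exp (∑ v, g v * spin (τ (p v)))
      = ∏ q, 2 * cosh (∑ v with p v = q, g v) := by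
  have hfiber (τ : Q → Bool) :
      ∑ v, g v * spin (τ (p v)) = ∑ q, (∑ v with p v = q, g v) * spin (τ q) := by
    rw [← Finset.sum_fiberwise univ p]
    refine sum_congr rfl fun q _ => ?_
    rw [sum_mul]
    exact sum_congr rfl fun v hv => by rw [(mem_filter.mp hv).2]
  simp_rw [hfiber, exp_sum, ← sum_bool_exp_mul_spin]
  exact (Fintype.prod_sum fun q b => exp ((∑ v with p v = q, g v) * spin b)).symm

lemma sum_exp_spin_of_forall_setoid [DecidableEq V] (s : Setoid V) [DecidableEq (Quotient s)]
    (g : V → ℝ) :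
    ∑ σ : V → Bool with ∀ u v, u ≈ v → σ u = σ v, exp (∑ v, g v * spin (σ v))
      = ∏ q : Quotient s, 2 * cosh (∑ v with Quotient.mk s v = q, g v) := by
  have himage : (univ.filter fun σ : V → Bool => ∀ u v, u ≈ v → σ u = σ v)
      = univ.image fun τ : Quotient s → Bool => τ ∘ Quotient.mk s := by
    ext σ
    simp only [mem_filter, mem_univ, true_and, mem_image]
    constructor
    · exact fun hσ => ⟨Quotient.lift σ hσ, rfl⟩
    · rintro ⟨τ, rfl⟩ u v huv
      simp only [Function.comp_apply, Quotient.sound huv]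
  have hinj : Function.Injective fun τ : Quotient s → Bool => τ ∘ Quotient.mk s :=
    fun τ τ' h => funext fun q => Quotient.inductionOn q (congrFun h)
  rw [himage, sum_image fun τ _ τ' _ h => hinj h]
  exact sum_exp_spin_comp _ g

lemma isingWeight_mul_exp (E : Finset (Sym2 V)) (J : Sym2 V → ℝ) (H f : V → ℝ) (σ : V → Bool) :
    isingWeight J H E σ * exp (∑ v, f v * spin (σ v)) = isingWeight J (H + f) E σ := by
  simp only [isingWeight, ← exp_add, add_assoc, ← sum_add_distrib, Pi.add_apply, add_mul]

end Spin

section Bonds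

variable {V : Type*}

lemma pairSpin_mk (σ : V → Bool) (u v : V) :
    pairSpin σ s(u, v) = if σ u = σ v then 1 else -1 := by
  simp only [pairSpin, Sym2.lift_mk]
  cases σ u <;> cases σ v <;> norm_num [spin]

lemma pairSpin_mk_eq_one_iff (σ : V → Bool) (u v : V) :
    pairSpin σ s(u, v) = 1 ↔ σ u = σ v := by
  rw [pairSpin_mk]
  split_ifs <;> norm_num [*]

lemma exp_mul_pairSpin (x : ℝ) (σ : V → Bool) (e : Sym2 V) :
    exp (x * pairSpin σ e)
      = exp x * ∑ b : Bool, (if b then 1 - exp (-2 * x) else exp (-2 * x)) *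
          if b = true → pairSpin σ e = 1 then 1 else 0 := by
  induction e using Sym2.ind with
  | _ u v =>
    rw [pairSpin_mk, Fintype.sum_bool]
    split_ifs <;> norm_num at *
    rw [← exp_add]
    ring_nf

lemma exp_sum_mul_pairSpin [DecidableEq V] (E : Finset (Sym2 V)) (J : Sym2 V → ℝ)
    (σ : V → Bool) :
    exp (∑ e ∈ E, J e * pairSpin σ e)
      = exp (∑ e ∈ E, J e) * ∑ ω : Config E, edgeWeight J E ω *
          if ∀ e : {e // e ∈ E}, ω e = true → pairSpin σ e = 1 then 1 else 0 := by
  rw [← sum_coe_sort E, ← sum_coe_sort E J, exp_sum, exp_sum]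
  simp_rw [exp_mul_pairSpin, prod_mul_distrib, Fintype.prod_sum, edgeWeight,
    ← Fintype.prod_boole, ← prod_mul_distrib]

instance (E : Finset (Sym2 V)) (ω : Config E) : Std.Symm (adj E ω) where
  symm u v := by
    rintro ⟨hne, he, hω⟩
    refine ⟨hne.symm, ?_⟩
    rw [Sym2.eq_swap]
    exact ⟨he, hω⟩

def connSetoid (E : Finset (Sym2 V)) (ω : Config E) : Setoid V where
  r := conn E ω
  iseqv := ⟨fun _ => .refl, fun h => Std.Symm.symm (r := Relation.ReflTransGen (adj E ω)) _ _ h,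
    .trans⟩

lemma forall_pairSpin_eq_one_iff (E : Finset (Sym2 V)) (ω : Config E) (σ : V → Bool) :
    (∀ e : {e // e ∈ E}, ω e = true → pairSpin σ e = 1) ↔ ∀ u v, conn E ω u v → σ u = σ v := by
  constructor
  · intro hσ u v huv
    induction huv with
    | refl => rfl
    | tail _ hadj ih =>
      obtain ⟨-, he, hopen⟩ := hadj
      exact ih.trans ((pairSpin_mk_eq_one_iff σ _ _).mp (hσ _ hopen))
  · rintro hσ ⟨e, he⟩
    induction e using Sym2.ind with
    | _ u v =>
      intro hopen
      rw [pairSpin_mk_eq_one_iff]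
      by_cases huv : u = v
      · rw [huv]
      · exact hσ u v (.single ⟨huv, he, hopen⟩)

end Bonds

section Clusters

variable {V : Type*} [Fintype V] [DecidableEq V] (E : Finset (Sym2 V))

lemma prod_clusters (ω : Config E) {M : Type*} [CommMonoid M] (h : Finset V → M) :
    ∏ C ∈ clusters E ω, h C
      = ∏ q : Quotient (connSetoid E ω), h (univ.filter fun v => Quotient.mk _ v = q) := by
  have hcluster (v : V) :
      cluster E ω v = univ.filter fun u => Quotient.mk (connSetoid E ω) u = Quotient.mk _ v := by
    ext u
    simp only [cluster, mem_filter, mem_univ, true_and, Quotient.eq]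
    exact ⟨(connSetoid E ω).symm', (connSetoid E ω).symm'⟩
  have hclusters : clusters E ω = univ.image fun q : Quotient (connSetoid E ω) =>
      univ.filter fun v => Quotient.mk _ v = q := by
    rw [clusters, funext hcluster]
    conv_rhs => rw [← image_univ_of_surjective (Quotient.mk_surjective (s := connSetoid E ω)),
      image_image]
    rfl
  have hinj : Function.Injective fun q : Quotient (connSetoid E ω) =>
      univ.filter fun v => Quotient.mk _ v = q := by
    intro q q' h
    induction q using Quotient.inductionOn with
    | h v => simpa using (Finset.ext_iff.mp h v).mp (by simp)
  rw [hclusters, prod_image fun q _ q' _ h => hinj h]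

lemma sum_exp_spin_of_forall_conn (ω : Config E) (g : V → ℝ) :
    ∑ σ : V → Bool with ∀ u v, conn E ω u v → σ u = σ v, exp (∑ v, g v * spin (σ v))
      = ∏ C ∈ clusters E ω, 2 * cosh (∑ v ∈ C, g v) := by
  rw [prod_clusters E ω]
  exact sum_exp_spin_of_forall_setoid (connSetoid E ω) g

lemma sum_isingWeight (J : Sym2 V → ℝ) (g : V → ℝ) :
    ∑ σ, isingWeight J g E σ
      = exp (∑ e ∈ E, J e) * ∑ ω, rcWeight J E ω * ∏ C ∈ clusters E ω, cosh (∑ v ∈ C, g v) := by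
  simp_rw [isingWeight, exp_add, exp_sum_mul_pairSpin, forall_pairSpin_eq_one_iff, mul_assoc,
    ← mul_sum, sum_mul]
  rw [sum_comm]
  refine congrArg _ (sum_congr rfl fun ω _ => ?_)
  calc ∑ σ : V → Bool, (edgeWeight J E ω *
          if ∀ u v, conn E ω u v → σ u = σ v then 1 else 0) * exp (∑ v, g v * spin (σ v))
      = edgeWeight J E ω * ∑ σ : V → Bool with ∀ u v, conn E ω u v → σ u = σ v,
          exp (∑ v, g v * spin (σ v)) := by
        simp only [mul_assoc, ← mul_sum, ite_mul, one_mul, zero_mul, sum_ite, sum_const_zero,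
          add_zero]
    _ = rcWeight J E ω * ∏ C ∈ clusters E ω, cosh (∑ v ∈ C, g v) := by
        rw [sum_exp_spin_of_forall_conn, prod_mul_distrib, prod_const, rcWeight]
        ring

-- For `J < 0` some `rcWeight`s are negative; positivity comes from the zero-field Ising side.
lemma sum_rcWeight_pos (J : Sym2 V → ℝ) : 0 < ∑ ω : Config E, rcWeight J E ω := by
  have hZ := sum_isingWeight E J 0
  simp only [Pi.zero_apply, sum_const_zero, cosh_zero, prod_const_one, mul_one] at hZ
  have hpos : 0 < ∑ σ, isingWeight J 0 E σ := sum_pos (fun σ _ => exp_pos _) univ_nonempty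
  rwa [hZ, mul_pos_iff_of_pos_left (exp_pos _)] at hpos

end Clusters

end FK

theorem tilted_mgf_identity_general
    {V : Type*} [Fintype V] [DecidableEq V]
    (E : Finset (Sym2 V))
    (J : Sym2 V → ℝ)
    (H : V → ℝ) (f : V → ℝ) :
    (∑ σ : V → Bool, FK.isingProb J H E σ * Real.exp (∑ v, f v * FK.spin (σ v)))
      = (∑ ωi : FK.Config E, FK.rcProb J E ωi *
            ∏ C ∈ FK.clusters E ωi,
              Real.cosh ((∑ v ∈ C, H v) + ∑ v ∈ C, f v))
        / ∑ ωi : FK.Config E, FK.rcProb J E ωi *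
            ∏ C ∈ FK.clusters E ωi, Real.cosh (∑ v ∈ C, H v) := by
  simp only [FK.isingProb, FK.rcProb, div_mul_eq_mul_div, ← Finset.sum_div,
    FK.isingWeight_mul_exp]
  rw [FK.sum_isingWeight, FK.sum_isingWeight, mul_div_mul_left _ _ (Real.exp_ne_zero _),
    div_div_div_cancel_right₀ (FK.sum_rcWeight_pos E J).ne']
  simp only [Pi.add_apply, Finset.sum_add_distrib]

/-- tilted moment generating function identity. -/
theorem tilted_mgf_identity
    {V : Type*} [Fintype V] [DecidableEq V]
    (E : Finset (Sym2 V)) (hE : ∀ e ∈ E, ¬ e.IsDiag)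
    (J : Sym2 V → ℝ) (hJ : ∀ e ∈ E, 0 ≤ J e)
    (H : V → ℝ) (hH : ∀ v, 0 ≤ H v) (f : V → ℝ) :
    (∑ σ : V → Bool, FK.isingProb J H E σ * Real.exp (∑ v, f v * FK.spin (σ v)))
      = (∑ ωi : FK.Config E, FK.rcProb J E ωi *
            ∏ C ∈ FK.clusters E ωi,
              Real.cosh ((∑ v ∈ C, H v) + ∑ v ∈ C, f v))
        / ∑ ωi : FK.Config E, FK.rcProb J E ωi *
            ∏ C ∈ FK.clusters E ωi, Real.cosh (∑ v ∈ C, H v) :=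
  tilted_mgf_identity_general E J H f
end
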